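/- arXiv:2407.00314 — 2 statements merged into one kernel-verified Lean document; each statement's English description precedes it below -/
import Mathlib

section
/- Let N ≥ 1, fix a coordinate x₀, and let P : ℝ^N → ℝ^N satisfy monotonicity, strict monotonicity, constant additivity, and connectedness. Suppose f, f̃ ∈ ℝ^N are such that f_n := P^n f − P^n f(x₀)·𝟙 has a finite accumulation point g and f̃_n := P^n f̃ − P^n f̃(x₀)·𝟙 has a finite accumulation point g̃. Then g = g̃, and both sequences converge in the sup norm to this common limit. -/
/-!
The oscillation `osc (u - v) = max (u - v) - min (u - v)` is a pseudometric on `ℝ^N` vanishing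
exactly on pairs that differ by a constant. A topical map does not increase it, and
connectedness makes `P^[n₀]` decrease it strictly unless it is zero. Along the orbits of two
vectors it therefore decreases to a limit, which by continuity is attained both at a pair of
accumulation points `(g, h)` and at `(P^[n₀] g, P^[n₀] h)`; hence `osc (g - h) = 0`, and
normalising at `x₀` gives `g = h`. Comparing the orbits of `f` and `P f` in this way shows that
`g` is a fixed point of the normalised map, so the oscillation between the orbit of `f` and `g`
decreases to `0`, which is convergence in the sup norm.
-/

open Filter Topology Function

section Contraction

variable {X : Type*} {T : X → X} {D : X → X → ℝ}

theorem antitone_iterate_of_le (hle : ∀ u v, D (T u) (T v) ≤ D u v) (u v : X) :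
    Antitone fun n => D (T^[n] u) (T^[n] v) :=
  antitone_nat_of_succ_le fun n => by
    simpa only [iterate_succ_apply'] using hle (T^[n] u) (T^[n] v)

variable [TopologicalSpace X]

theorem tendsto_iterate_add_subseq (hT : Continuous T) (hD : Continuous (uncurry D)) (m : ℕ)
    {u v g h : X} {φ : ℕ → ℕ} (hg : Tendsto (fun k => T^[φ k] u) atTop (𝓝 g))
    (hh : Tendsto (fun k => T^[φ k] v) atTop (𝓝 h)) :
    Tendsto (fun k => D (T^[m + φ k] u) (T^[m + φ k] v)) atTop (𝓝 (D (T^[m] g) (T^[m] h))) := by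
  simp only [iterate_add_apply]
  have hTm := hT.iterate m
  exact (hD.tendsto _).comp (((hTm.tendsto g).comp hg).prodMk_nhds ((hTm.tendsto h).comp hh))

theorem le_zero_of_tendsto_iterate_subseq (hT : Continuous T) (hD : Continuous (uncurry D))
    (hle : ∀ u v, D (T u) (T v) ≤ D u v) {n₀ : ℕ}
    (hlt : ∀ u v, 0 < D u v → D (T^[n₀] u) (T^[n₀] v) < D u v)
    {u v g h : X} {φ : ℕ → ℕ} (hφ : StrictMono φ) (hg : Tendsto (fun k => T^[φ k] u) atTop (𝓝 g))
    (hh : Tendsto (fun k => T^[φ k] v) atTop (𝓝 h)) :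
    D g h ≤ 0 := by
  have hω := antitone_iterate_of_le hle u v
  have hlim : Tendsto (fun k => D (T^[φ k] u) (T^[φ k] v)) atTop (𝓝 (D g h)) := by
    simpa only [zero_add, iterate_zero, id] using tendsto_iterate_add_subseq hT hD 0 hg hh
  have hlow : ∀ m, D g h ≤ D (T^[m] u) (T^[m] v) := fun m =>
    ((hω.comp_monotone hφ.monotone).le_of_tendsto hlim m).trans (hω (hφ.id_le m))
  have hshift : D g h ≤ D (T^[n₀] g) (T^[n₀] h) :=
    ge_of_tendsto (tendsto_iterate_add_subseq hT hD n₀ hg hh) (Eventually.of_forall fun k => hlow _)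
  by_contra hpos
  exact (hlt g h (not_le.1 hpos)).not_ge hshift

theorem tendsto_iterate_of_isFixedPt (hD : Continuous (uncurry D))
    (hle : ∀ u v, D (T u) (T v) ≤ D u v) (hD0 : ∀ u v, 0 ≤ D u v) {u g : X} (hgg : D g g = 0)
    (hfix : IsFixedPt T g) {φ : ℕ → ℕ} (hφ : StrictMono φ)
    (hg : Tendsto (fun k => T^[φ k] u) atTop (𝓝 g)) :
    Tendsto (fun n => D (T^[n] u) g) atTop (𝓝 0) := by
  have hω : ∀ n, D (T^[n] u) (T^[n] g) = D (T^[n] u) g := fun n => by rw [(hfix.iterate n).eq]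
  have hinf := tendsto_atTop_ciInf (antitone_iterate_of_le hle u g)
    ⟨0, Set.forall_mem_range.2 fun n => hD0 _ _⟩
  simp only [hω] at hinf
  have hsub : Tendsto (fun k => D (T^[φ k] u) g) atTop (𝓝 0) :=
    hgg ▸ (hD.tendsto (g, g)).comp (hg.prodMk_nhds tendsto_const_nhds)
  rwa [tendsto_nhds_unique (hinf.comp hφ.tendsto_atTop) hsub] at hinf

end Contraction

section Oscillation

variable {ι : Type*}

/-- `max w - min w`, written with suprema only. -/
noncomputable def osc (w : ι → ℝ) : ℝ := (⨆ x, w x) + ⨆ x, -w x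

theorem osc_neg (w : ι → ℝ) : osc (-w) = osc w := by
  simp only [osc, Pi.neg_apply, neg_neg, add_comm]

theorem osc_sub_comm (u v : ι → ℝ) : osc (u - v) = osc (v - u) := by
  rw [← osc_neg, neg_sub]

theorem osc_sub_self [Nonempty ι] (u : ι → ℝ) : osc (u - u) = 0 := by
  simp [osc]

section Finite

variable [Finite ι]

theorem ciSup_add_const [Nonempty ι] (w : ι → ℝ) (c : ℝ) :
    ⨆ x, (w x + c) = (⨆ x, w x) + c :=
  ((OrderIso.addRight c).map_ciSup (Finite.bddAbove_range w)).symm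

theorem osc_add_const [Nonempty ι] (w : ι → ℝ) (c : ℝ) : osc (fun x => w x + c) = osc w := by
  simp only [osc, neg_add, ciSup_add_const]
  ring

theorem osc_nonneg [Nonempty ι] (w : ι → ℝ) : 0 ≤ osc w := by
  obtain ⟨x⟩ := ‹Nonempty ι›
  have := le_ciSup (Finite.bddAbove_range w) x
  have := le_ciSup (Finite.bddAbove_range fun x => -w x) x
  unfold osc
  linarith

theorem abs_le_osc {w : ι → ℝ} {x₀ : ι} (hw : w x₀ = 0) (x : ι) : |w x| ≤ osc w := by
  have := le_ciSup (Finite.bddAbove_range w) x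
  have := le_ciSup (Finite.bddAbove_range w) x₀
  have := le_ciSup (Finite.bddAbove_range fun x => -w x) x
  have := le_ciSup (Finite.bddAbove_range fun x => -w x) x₀
  rw [abs_le]
  unfold osc
  constructor <;> linarith

theorem exists_lt_ciSup_of_osc_pos [Nonempty ι] {w : ι → ℝ} (h : 0 < osc w) :
    ∃ x, w x < ⨆ y, w y := by
  by_contra! hw
  have hconst : (fun x => -w x) = fun _ => -⨆ y, w y :=
    funext fun x => by rw [(hw x).antisymm' (le_ciSup (Finite.bddAbove_range w) x)]
  rw [osc, hconst, ciSup_const] at h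
  simp at h

end Finite

variable [Fintype ι]

theorem dist_le_osc_sub {u v : ι → ℝ} {x₀ : ι} (h : u x₀ = v x₀) : dist u v ≤ osc (u - v) := by
  have : Nonempty ι := ⟨x₀⟩
  refine (dist_pi_le_iff (osc_nonneg _)).2 fun x => ?_
  rw [Real.dist_eq]
  exact abs_le_osc (w := u - v) (x₀ := x₀) (by simp [h]) x

theorem continuous_osc [Nonempty ι] : Continuous (osc : (ι → ℝ) → ℝ) := by
  have hsup : Continuous fun w : ι → ℝ => ⨆ x, w x := by
    simp only [← Finset.sup'_univ_eq_ciSup]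
    exact Continuous.finset_sup'_apply _ fun x _ => continuous_apply x
  exact hsup.add (hsup.comp continuous_neg)

theorem continuous_osc_sub [Nonempty ι] :
    Continuous (uncurry fun u v : ι → ℝ => osc (u - v)) :=
  continuous_osc.comp (continuous_fst.sub continuous_snd)

end Oscillation

/-- The topical maps of nonlinear Perron–Frobenius theory. -/
structure IsTopical {ι : Type*} (P : (ι → ℝ) → ι → ℝ) : Prop where
  monotone : Monotone P
  add_const : ∀ (u : ι → ℝ) (c : ℝ), P (fun x => u x + c) = fun x => P u x + c

namespace IsTopical

variable {ι : Type*} {P : (ι → ℝ) → ι → ℝ}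

theorem iterate (hP : IsTopical P) (n : ℕ) : IsTopical P^[n] := by
  induction n with
  | zero => exact ⟨monotone_id, fun _ _ => rfl⟩
  | succ n ih =>
    refine ⟨ih.monotone.comp hP.monotone, fun u c => ?_⟩
    simp only [iterate_succ_apply, hP.add_const, ih.add_const]

theorem apply_le_add (hP : IsTopical P) {u v : ι → ℝ} {c : ℝ} (h : ∀ x, u x ≤ v x + c)
    (x : ι) : P u x ≤ P v x + c := by
  simpa only [hP.add_const] using hP.monotone (show u ≤ fun x => v x + c from h) x

theorem lipschitzWith_one [Fintype ι] (hP : IsTopical P) : LipschitzWith 1 P := by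
  refine LipschitzWith.of_dist_le_mul fun u v => ?_
  rw [NNReal.coe_one, one_mul]
  have hpt : ∀ x, |u x - v x| ≤ dist u v := fun x => by
    simpa only [Real.dist_eq] using dist_le_pi_dist u v x
  refine (dist_pi_le_iff dist_nonneg).2 fun x => ?_
  rw [Real.dist_eq, abs_sub_le_iff]
  constructor
  · linarith [hP.apply_le_add (u := u) (v := v) (fun y => by linarith [(abs_le.1 (hpt y)).2]) x]
  · linarith [hP.apply_le_add (u := v) (v := u) (fun y => by linarith [(abs_le.1 (hpt y)).1]) x]

section Finite

variable [Finite ι] [Nonempty ι]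

theorem ciSup_sub_le (hP : IsTopical P) (u v : ι → ℝ) :
    ⨆ x, (P u x - P v x) ≤ ⨆ x, (u x - v x) := by
  refine ciSup_le fun x => ?_
  have := hP.apply_le_add (u := u) (v := v) (c := ⨆ x, (u x - v x)) (fun y => by
    linarith [le_ciSup (Finite.bddAbove_range fun x => u x - v x) y]) x
  linarith

theorem ciSup_sub_lt (hP : IsTopical P)
    (hconn : ∀ f g : ι → ℝ, (∀ x, g x ≤ f x) → (∃ x, g x < f x) → ∀ y, P g y < P f y)
    {u v : ι → ℝ} (h : ∃ x, u x - v x < ⨆ y, (u y - v y)) :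
    ⨆ x, (P u x - P v x) < ⨆ x, (u x - v x) := by
  set β := ⨆ x, (u x - v x)
  have hlt := hconn (fun x => v x + β) u
    (fun y => by linarith [le_ciSup (Finite.bddAbove_range fun x => u x - v x) y])
    (h.imp fun x hx => by linarith)
  obtain ⟨y, hy⟩ := exists_eq_ciSup_of_finite (f := fun x => P u x - P v x)
  rw [← hy]
  have := hlt y
  rw [hP.add_const] at this
  linarith

theorem osc_sub_le (hP : IsTopical P) (u v : ι → ℝ) : osc (P u - P v) ≤ osc (u - v) := by
  simp only [osc, Pi.sub_apply, neg_sub]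
  exact add_le_add (hP.ciSup_sub_le u v) (hP.ciSup_sub_le v u)

theorem osc_sub_lt (hP : IsTopical P)
    (hconn : ∀ f g : ι → ℝ, (∀ x, g x ≤ f x) → (∃ x, g x < f x) → ∀ y, P g y < P f y)
    {u v : ι → ℝ} (h : 0 < osc (u - v)) : osc (P u - P v) < osc (u - v) := by
  have huv := exists_lt_ciSup_of_osc_pos h
  have hvu := exists_lt_ciSup_of_osc_pos (w := v - u) (by rwa [osc_sub_comm] at h)
  simp only [osc, Pi.sub_apply, neg_sub] at huv hvu ⊢
  exact add_lt_add (hP.ciSup_sub_lt hconn huv) (hP.ciSup_sub_lt hconn hvu)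

end Finite

end IsTopical

section Normalization

variable {ι : Type*}

def normalizeAt (x₀ : ι) (u : ι → ℝ) : ι → ℝ := fun x => u x - u x₀

/-- The map induced by `P` on `ℝ^ι` modulo constants, in the gauge `u x₀ = 0`. -/
def normalizedMap (x₀ : ι) (P : (ι → ℝ) → ι → ℝ) (u : ι → ℝ) : ι → ℝ := normalizeAt x₀ (P u)

variable {x₀ : ι}

theorem normalizeAt_apply_self (u : ι → ℝ) : normalizeAt x₀ u x₀ = 0 := sub_self _

theorem apply_eq_zero_of_tendsto_normalizeAt {α : Type*} {l : Filter α} [l.NeBot]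
    {a : α → ι → ℝ} {g : ι → ℝ} (hg : Tendsto (fun k => normalizeAt x₀ (a k)) l (𝓝 g)) :
    g x₀ = 0 :=
  (isClosed_eq (continuous_apply x₀) continuous_const).mem_of_tendsto hg
    (Eventually.of_forall fun k => normalizeAt_apply_self (a k))

theorem normalizeAt_add_const (u : ι → ℝ) (c : ℝ) :
    normalizeAt x₀ (fun x => u x + c) = normalizeAt x₀ u :=
  funext fun x => add_sub_add_right_eq_sub (u x) (u x₀) c

theorem osc_normalizeAt_sub [Finite ι] (u v : ι → ℝ) :
    osc (normalizeAt x₀ u - normalizeAt x₀ v) = osc (u - v) := by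
  have : Nonempty ι := ⟨x₀⟩
  have h : normalizeAt x₀ u - normalizeAt x₀ v = fun x => (u - v) x + (v x₀ - u x₀) :=
    funext fun x => by simp only [normalizeAt, Pi.sub_apply]; ring
  rw [h, osc_add_const]

end Normalization

namespace IsTopical

variable {ι : Type*} {P : (ι → ℝ) → ι → ℝ} {x₀ : ι}

theorem semiconj_normalizeAt (hP : IsTopical P) :
    Semiconj (normalizeAt x₀) P (normalizedMap x₀ P) := fun u => by
  have h : normalizeAt x₀ u = fun x => u x + -u x₀ := funext fun x => sub_eq_add_neg _ _
  rw [normalizedMap, h, hP.add_const, normalizeAt_add_const]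

theorem normalizeAt_iterate (hP : IsTopical P) (n : ℕ) (u : ι → ℝ) :
    normalizeAt x₀ (P^[n] u) = (normalizedMap x₀ P)^[n] (normalizeAt x₀ u) :=
  hP.semiconj_normalizeAt.iterate_right n u

theorem osc_sub_iterate_normalizedMap [Finite ι] (hP : IsTopical P) (n : ℕ) (u v : ι → ℝ) :
    osc ((normalizedMap x₀ P)^[n] u - (normalizedMap x₀ P)^[n] v) = osc (P^[n] u - P^[n] v) := by
  cases n with
  | zero => rfl
  | succ n =>
    simp only [iterate_succ_apply, normalizedMap, ← hP.normalizeAt_iterate]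
    exact osc_normalizeAt_sub _ _

theorem continuous_normalizedMap [Fintype ι] (hP : IsTopical P) :
    Continuous (normalizedMap x₀ P) :=
  have hPc := hP.lipschitzWith_one.continuous
  continuous_pi fun x => ((continuous_apply x).comp hPc).sub ((continuous_apply x₀).comp hPc)

theorem osc_sub_normalizedMap_le [Finite ι] (hP : IsTopical P) (u v : ι → ℝ) :
    osc (normalizedMap x₀ P u - normalizedMap x₀ P v) ≤ osc (u - v) :=
  have : Nonempty ι := ⟨x₀⟩
  (hP.osc_sub_iterate_normalizedMap 1 u v).trans_le (hP.osc_sub_le u v)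

variable [Fintype ι] {n₀ : ℕ}

theorem eq_of_tendsto_normalizeAt (hP : IsTopical P)
    (hconn : ∀ f g : ι → ℝ, (∀ x, g x ≤ f x) → (∃ x, g x < f x) → ∀ y, P^[n₀] g y < P^[n₀] f y)
    {f f' g g' : ι → ℝ} {φ : ℕ → ℕ}
    (hφ : StrictMono φ) (hg : Tendsto (fun k => normalizeAt x₀ (P^[φ k] f)) atTop (𝓝 g))
    (hg' : Tendsto (fun k => normalizeAt x₀ (P^[φ k] f')) atTop (𝓝 g')) :
    g = g' := by
  have : Nonempty ι := ⟨x₀⟩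
  have hlt : ∀ u v, 0 < osc (u - v) →
      osc ((normalizedMap x₀ P)^[n₀] u - (normalizedMap x₀ P)^[n₀] v) < osc (u - v) :=
    fun u v h => (hP.osc_sub_iterate_normalizedMap n₀ u v).trans_lt
      ((hP.iterate n₀).osc_sub_lt hconn h)
  have hosc := le_zero_of_tendsto_iterate_subseq hP.continuous_normalizedMap continuous_osc_sub
    hP.osc_sub_normalizedMap_le hlt hφ (u := normalizeAt x₀ f) (v := normalizeAt x₀ f')
    (by simpa only [hP.normalizeAt_iterate] using hg)
    (by simpa only [hP.normalizeAt_iterate] using hg')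
  have h0 : g x₀ = g' x₀ := by
    rw [apply_eq_zero_of_tendsto_normalizeAt hg, apply_eq_zero_of_tendsto_normalizeAt hg']
  exact dist_le_zero.1 ((dist_le_osc_sub h0).trans hosc)

theorem tendsto_normalizeAt_iterate (hP : IsTopical P)
    (hconn : ∀ f g : ι → ℝ, (∀ x, g x ≤ f x) → (∃ x, g x < f x) → ∀ y, P^[n₀] g y < P^[n₀] f y)
    {f g : ι → ℝ} {φ : ℕ → ℕ} (hφ : StrictMono φ)
    (hg : Tendsto (fun k => normalizeAt x₀ (P^[φ k] f)) atTop (𝓝 g)) :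
    Tendsto (fun n => normalizeAt x₀ (P^[n] f)) atTop (𝓝 g) := by
  have : Nonempty ι := ⟨x₀⟩
  set T := normalizedMap x₀ P
  have hgP : Tendsto (fun k => normalizeAt x₀ (P^[φ k] (P f))) atTop (𝓝 (T g)) := by
    have hcomm : ∀ k, normalizeAt x₀ (P^[φ k] (P f)) = T (normalizeAt x₀ (P^[φ k] f)) := fun k => by
      rw [← iterate_succ_apply, iterate_succ_apply', hP.semiconj_normalizeAt.eq]
    exact ((hP.continuous_normalizedMap.tendsto g).comp hg).congr fun k => (hcomm k).symm
  have hfix : IsFixedPt T g := (hP.eq_of_tendsto_normalizeAt hconn hφ hg hgP).symm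
  have hosc := tendsto_iterate_of_isFixedPt continuous_osc_sub hP.osc_sub_normalizedMap_le
    (fun _ _ => osc_nonneg _)
    (osc_sub_self g) hfix hφ (u := normalizeAt x₀ f)
    (by simpa only [hP.normalizeAt_iterate] using hg)
  rw [tendsto_iff_dist_tendsto_zero]
  refine squeeze_zero (fun _ => dist_nonneg) (fun n => ?_) hosc
  rw [← hP.normalizeAt_iterate]
  exact dist_le_osc_sub (by rw [normalizeAt_apply_self, apply_eq_zero_of_tendsto_normalizeAt hg])

end IsTopical

theorem stmt2_general (N : ℕ) (x₀ : Fin N) (P : (Fin N → ℝ) → (Fin N → ℝ))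
    (mono : ∀ f g : Fin N → ℝ, (∀ x, g x ≤ f x) → ∀ x, P g x ≤ P f x)
    (cadd : ∀ (f : Fin N → ℝ) (c : ℝ), P (fun x => f x + c) = fun x => P f x + c)
    (conn : ∃ n₀ : ℕ, 0 < n₀ ∧ ∀ f g : Fin N → ℝ, (∀ x, g x ≤ f x) → (∃ x, g x < f x) →
      ∀ y, P^[n₀] g y < P^[n₀] f y)
    (f ftil g gtil : Fin N → ℝ)
    (φ : ℕ → ℕ) (hφ : StrictMono φ)
    (hacc : Tendsto (fun k => fun x => P^[φ k] f x - P^[φ k] f x₀) atTop (nhds g))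
    (ψ : ℕ → ℕ) (hψ : StrictMono ψ)
    (hacctil : Tendsto (fun k => fun x => P^[ψ k] ftil x - P^[ψ k] ftil x₀) atTop (nhds gtil)) :
    g = gtil ∧
      Tendsto (fun n => fun x => P^[n] f x - P^[n] f x₀) atTop (nhds g) ∧
      Tendsto (fun n => fun x => P^[n] ftil x - P^[n] ftil x₀) atTop (nhds g) := by
  obtain ⟨n₀, -, hconn⟩ := conn
  have hP : IsTopical P := ⟨fun u v huv => mono v u huv, cadd⟩
  have hconv : Tendsto (fun n => normalizeAt x₀ (P^[n] f)) atTop (𝓝 g) :=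
    hP.tendsto_normalizeAt_iterate hconn hφ hacc
  have hconvtil : Tendsto (fun n => normalizeAt x₀ (P^[n] ftil)) atTop (𝓝 gtil) :=
    hP.tendsto_normalizeAt_iterate hconn hψ hacctil
  have heq : g = gtil := hP.eq_of_tendsto_normalizeAt hconn strictMono_id hconv hconvtil
  exact ⟨heq, hconv, heq ▸ hconvtil⟩

theorem stmt2 (N : ℕ) (hN : 1 ≤ N) (x₀ : Fin N) (P : (Fin N → ℝ) → (Fin N → ℝ))
    (mono : ∀ f g : Fin N → ℝ, (∀ x, g x ≤ f x) → ∀ x, P g x ≤ P f x)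
    (smono : ∀ f g : Fin N → ℝ, (∀ x, g x ≤ f x) → ∀ x, g x < f x → P g x < P f x)
    (cadd : ∀ (f : Fin N → ℝ) (c : ℝ), P (fun x => f x + c) = fun x => P f x + c)
    (conn : ∃ n₀ : ℕ, 0 < n₀ ∧ ∀ f g : Fin N → ℝ, (∀ x, g x ≤ f x) → (∃ x, g x < f x) →
      ∀ y, P^[n₀] g y < P^[n₀] f y)
    (f ftil g gtil : Fin N → ℝ)
    (φ : ℕ → ℕ) (hφ : StrictMono φ)
    (hacc : Tendsto (fun k => fun x => P^[φ k] f x - P^[φ k] f x₀) atTop (nhds g))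
    (ψ : ℕ → ℕ) (hψ : StrictMono ψ)
    (hacctil : Tendsto (fun k => fun x => P^[ψ k] ftil x - P^[ψ k] ftil x₀) atTop (nhds gtil)) :
    g = gtil ∧
      Tendsto (fun n => fun x => P^[n] f x - P^[n] f x₀) atTop (nhds g) ∧
      Tendsto (fun n => fun x => P^[n] ftil x - P^[n] ftil x₀) atTop (nhds g) :=
  stmt2_general N x₀ P mono cadd conn f ftil g gtil φ hφ hacc ψ hψ hacctil
end

section
/- Let N ≥ 1, fix a coordinate x₀, and let P : ℝ^N → ℝ^N satisfy monotonicity, strict monotonicity, and constant additivity. If for some f ∈ ℝ^N the vector g ∈ ℝ^N is a finite accumulation point of the sequence f_n := P^n f − P^n f(x₀)·𝟙, then Pg − g is a constant vector, i.e., there exists λ ∈ ℝ with Pg = g + λ·𝟙 (and hence P^n g = g + nλ·𝟙 for all n). -/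
/-!
A monotone, additively homogeneous map is nonexpansive in the sup norm, and the largest increment
`max_x (P u - u) x` cannot increase along an orbit. Along the orbit of `f` it therefore converges,
and by continuity every iterate `P^[j] g` has the same largest increment `β`. Strict monotonicity
makes the set of coordinates where `P^[j+1] g - P^[j] g` attains `β` shrink with `j`, so one
coordinate gains exactly `β` at every step. Applied to `u ↦ -P (-u)` this gives a coordinate gaining
exactly the smallest increment `α` at every step. As `g` is a limit of normalized iterates of `f`,
`P^[n] g` has bounded oscillation for infinitely many `n`, which forces `α = β`.
-/

open Filter Finset Topology

theorem Antitone.tendsto_of_subseq {a : ℕ → ℝ} (ha : Antitone a) {ψ : ℕ → ℕ}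
    (hψ : Tendsto ψ atTop atTop) {L : ℝ} (h : Tendsto (a ∘ ψ) atTop (𝓝 L)) :
    Tendsto a atTop (𝓝 L) := by
  have hL : ∀ n, L ≤ a n := fun n =>
    _root_.le_of_tendsto h ((hψ.eventually_ge_atTop n).mono fun k hk => ha hk)
  have hinf := tendsto_atTop_ciInf ha ⟨L, Set.forall_mem_range.2 hL⟩
  rwa [tendsto_nhds_unique (hinf.comp hψ) h] at hinf

theorem exists_forall_mem_of_antitone {ι : Type*} [Finite ι] {t : ℕ → Set ι}
    (ht : Antitone t) (hne : ∀ n, (t n).Nonempty) : ∃ x, ∀ n, x ∈ t n := by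
  obtain ⟨n, hn⟩ := WellFoundedLT.antitone_chain_condition ht
  obtain ⟨x, hx⟩ := hne n
  refine ⟨x, fun m => ?_⟩
  rcases le_total n m with h | h
  · exact hn m h ▸ hx
  · exact ht h hx

theorem nonpos_of_frequently_add_mul_le {a d C : ℝ} (h : ∃ᶠ n : ℕ in atTop, a + n * d ≤ C) :
    d ≤ 0 := by
  by_contra! hd
  have hev : ∀ᶠ n : ℕ in atTop, C < a + n * d :=
    (tendsto_atTop_add_const_left _ a
      (tendsto_natCast_atTop_atTop.atTop_mul_const hd)).eventually_gt_atTop C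
  obtain ⟨n, h1, h2⟩ := (h.and_eventually hev).exists
  linarith

namespace TopicalMap

variable {ι : Type*} {P : (ι → ℝ) → ι → ℝ}

variable (P) in
def IsAddHomogeneous : Prop :=
  ∀ (u : ι → ℝ) (c : ℝ), P (fun x => u x + c) = fun x => P u x + c

theorem iterate_add_const (hadd : IsAddHomogeneous P) (n : ℕ) (u : ι → ℝ) (c : ℝ) :
    P^[n] (fun x => u x + c) = fun x => P^[n] u x + c := by
  induction n generalizing u with
  | zero => rfl
  | succ n ih => rw [Function.iterate_succ_apply, Function.iterate_succ_apply, hadd, ih]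

theorem iterate_eq_add_mul_of_apply_eq_add (hadd : IsAddHomogeneous P) {u : ι → ℝ} {c : ℝ}
    (hu : P u = fun x => u x + c) (n : ℕ) : P^[n] u = fun x => u x + n * c := by
  induction n with
  | zero => simp
  | succ n ih =>
    rw [Function.iterate_succ_apply', ih, hadd, hu]
    funext x
    push_cast
    ring

theorem lipschitzWith_one [Fintype ι] (hmono : Monotone P) (hadd : IsAddHomogeneous P) :
    LipschitzWith 1 P := by
  have key : ∀ u v x, P u x ≤ P v x + dist u v := fun u v x => by
    have huv : u ≤ fun y => v y + dist u v := fun y => by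
      linarith [le_abs_self (u y - v y), Real.dist_eq (u y) (v y) ▸ dist_le_pi_dist u v y]
    simpa only [hadd v (dist u v)] using hmono huv x
  refine LipschitzWith.of_dist_le_mul fun u v => ?_
  rw [NNReal.coe_one, one_mul, dist_pi_le_iff dist_nonneg]
  intro x
  rw [Real.dist_eq, abs_sub_le_iff]
  exact ⟨by linarith [key u v x], by linarith [key v u x, dist_comm u v]⟩

variable (P) in
def negConj (u : ι → ℝ) : ι → ℝ := -P (-u)

theorem monotone_negConj (hmono : Monotone P) : Monotone (negConj P) :=
  fun _ _ h => neg_le_neg (hmono (neg_le_neg h))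

theorem negConj_lt_negConj (hsmono : ∀ u v, u ≤ v → ∀ x, u x < v x → P u x < P v x) :
    ∀ u v, u ≤ v → ∀ x, u x < v x → negConj P u x < negConj P v x :=
  fun _ _ h x hx => neg_lt_neg (hsmono _ _ (neg_le_neg h) x (neg_lt_neg hx))

theorem isAddHomogeneous_negConj (hadd : IsAddHomogeneous P) :
    IsAddHomogeneous (negConj P) := fun u c => by
  have hneg : (-fun x => u x + c) = fun x => (-u) x + -c := by
    funext x
    simp only [Pi.neg_apply, neg_add]
  funext x
  rw [negConj, hneg, hadd, Pi.neg_apply, neg_add, neg_neg]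
  rfl

theorem iterate_negConj (n : ℕ) (u : ι → ℝ) : (negConj P)^[n] u = -P^[n] (-u) := by
  induction n generalizing u with
  | zero => simp
  | succ n ih =>
    rw [Function.iterate_succ_apply', ih, negConj, neg_neg, Function.iterate_succ_apply']

theorem frequently_iterate_sub_le [Fintype ι] (hP : LipschitzWith 1 P)
    (hadd : IsAddHomogeneous P) {f g : ι → ℝ} {φ : ℕ → ℕ} (hφ : StrictMono φ) {c : ℕ → ℝ}
    (hacc : Tendsto (fun k x => P^[φ k] f x - c k) atTop (𝓝 g)) (x y : ι) :
    ∃ C, ∃ᶠ n in atTop, P^[n] g x - P^[n] g y ≤ C := by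
  set h : ℕ → ι → ℝ := fun k z => P^[φ k] f z - c k
  obtain ⟨B, hB⟩ := ((((continuous_apply x).tendsto g).comp hacc).sub
    (((continuous_apply y).tendsto g).comp hacc)).bddAbove_range
  refine ⟨B + 2 * dist g (h 0), frequently_atTop.2 fun n₀ => ?_⟩
  set l := n₀ + φ 0
  have hl : l ≤ φ l := hφ.le_apply
  refine ⟨φ l - φ 0, by omega, ?_⟩
  have horbit : P^[φ l - φ 0] (h 0) = fun z => P^[φ l] f z - c 0 := by
    simp only [h, sub_eq_add_neg, iterate_add_const hadd, ← Function.iterate_add_apply,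
      Nat.sub_add_cancel (hφ.monotone (Nat.zero_le l))]
  have hclose : ∀ z, |P^[φ l - φ 0] g z - P^[φ l - φ 0] (h 0) z| ≤ dist g (h 0) := fun z => by
    rw [← Real.dist_eq]
    exact (dist_le_pi_dist _ _ z).trans (by simpa using (hP.iterate _).dist_le_mul g (h 0))
  have hBl := hB ⟨l, rfl⟩
  rw [horbit] at hclose
  have hx := abs_le.1 (hclose x)
  have hy := abs_le.1 (hclose y)
  simp only [Function.comp_apply, h] at hBl
  linarith

section Increment

variable [Fintype ι] [Nonempty ι]

variable (P) in
noncomputable def maxIncrement (u : ι → ℝ) : ℝ :=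
  univ.sup' univ_nonempty fun x => P u x - u x

variable (P) in
def argmaxIncrement (u : ι → ℝ) : Set ι :=
  {x | P u x - u x = maxIncrement P u}

theorem sub_le_maxIncrement (u : ι → ℝ) (x : ι) : P u x - u x ≤ maxIncrement P u :=
  le_sup' (fun x => P u x - u x) (mem_univ x)

theorem maxIncrement_le_iff {u : ι → ℝ} {d : ℝ} :
    maxIncrement P u ≤ d ↔ ∀ x, P u x - u x ≤ d := by
  simp [maxIncrement]

theorem argmaxIncrement_nonempty (u : ι → ℝ) : (argmaxIncrement P u).Nonempty := by
  obtain ⟨x, -, hx⟩ := exists_mem_eq_sup' univ_nonempty fun x => P u x - u x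
  exact ⟨x, hx.symm⟩

theorem maxIncrement_add_const (hadd : IsAddHomogeneous P) (u : ι → ℝ) (c : ℝ) :
    maxIncrement P (fun x => u x + c) = maxIncrement P u := by
  simp only [maxIncrement, hadd u c, add_sub_add_right_eq_sub]

theorem continuous_maxIncrement (hP : Continuous P) : Continuous (maxIncrement P) :=
  Continuous.finset_sup'_apply _ fun x _ => ((continuous_apply x).comp hP).sub (continuous_apply x)

theorem maxIncrement_apply_le (hmono : Monotone P) (hadd : IsAddHomogeneous P) (u : ι → ℝ) :
    maxIncrement P (P u) ≤ maxIncrement P u := by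
  have h : P u ≤ fun x => u x + maxIncrement P u := fun x => by
    linarith [sub_le_maxIncrement (P := P) u x]
  refine maxIncrement_le_iff.2 fun x => ?_
  have := hmono h x
  rw [hadd] at this
  linarith

theorem antitone_maxIncrement_iterate (hmono : Monotone P) (hadd : IsAddHomogeneous P)
    (u : ι → ℝ) : Antitone fun n => maxIncrement P (P^[n] u) :=
  antitone_nat_of_succ_le fun n => by
    simpa only [Function.iterate_succ_apply'] using maxIncrement_apply_le hmono hadd (P^[n] u)

theorem argmaxIncrement_apply_subset
    (hsmono : ∀ u v, u ≤ v → ∀ x, u x < v x → P u x < P v x) (hadd : IsAddHomogeneous P)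
    {u : ι → ℝ} (hu : maxIncrement P (P u) = maxIncrement P u) :
    argmaxIncrement P (P u) ⊆ argmaxIncrement P u := by
  intro x hx
  by_contra hxu
  simp only [argmaxIncrement, Set.mem_ofPred_eq] at hx hxu
  have hle : P u ≤ fun y => u y + maxIncrement P u := fun y => by
    linarith [sub_le_maxIncrement (P := P) u y]
  have hlt : P u x < u x + maxIncrement P u :=
    lt_of_le_of_ne (hle x) fun h => hxu (by linarith)
  have := hsmono _ _ hle x hlt
  rw [hadd] at this
  linarith

variable {f g : ι → ℝ} {φ : ℕ → ℕ} {c : ℕ → ℝ}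

theorem exists_iterate_eq_add_mul_maxIncrement
    (hsmono : ∀ u v, u ≤ v → ∀ x, u x < v x → P u x < P v x) (hadd : IsAddHomogeneous P)
    (hg : ∀ j, maxIncrement P (P^[j] g) = maxIncrement P g) :
    ∃ x, ∀ n : ℕ, P^[n] g x = g x + n * maxIncrement P g := by
  have ht : Antitone fun j => argmaxIncrement P (P^[j] g) := antitone_nat_of_succ_le fun j => by
    rw [Function.iterate_succ_apply']
    exact argmaxIncrement_apply_subset hsmono hadd
      (by rw [← Function.iterate_succ_apply' P, hg, hg])
  obtain ⟨x, hx⟩ := exists_forall_mem_of_antitone ht fun j => argmaxIncrement_nonempty _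
  refine ⟨x, fun n => ?_⟩
  induction n with
  | zero => simp
  | succ n ih =>
    have hxn := hx n
    simp only [argmaxIncrement, Set.mem_ofPred_eq, hg] at hxn
    rw [Function.iterate_succ_apply']
    push_cast
    linarith

theorem maxIncrement_iterate_eq_of_tendsto (hmono : Monotone P) (hadd : IsAddHomogeneous P)
    (hφ : StrictMono φ) (hacc : Tendsto (fun k x => P^[φ k] f x - c k) atTop (𝓝 g)) (j : ℕ) :
    maxIncrement P (P^[j] g) = maxIncrement P g := by
  have hP := (lipschitzWith_one hmono hadd).continuous
  have hlim : ∀ j, Tendsto (fun k => maxIncrement P (P^[φ k + j] f)) atTop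
      (𝓝 (maxIncrement P (P^[j] g))) := fun j => by
    refine ((((continuous_maxIncrement hP).comp (hP.iterate j)).tendsto g).comp hacc).congr
      fun k => ?_
    simp only [Function.comp_apply, sub_eq_add_neg, iterate_add_const hadd,
      maxIncrement_add_const hadd, ← Function.iterate_add_apply, add_comm j]
  have ha := antitone_maxIncrement_iterate hmono hadd f
  have hψ : ∀ j, Tendsto (fun k => φ k + j) atTop atTop := fun j =>
    tendsto_atTop_mono (fun k => Nat.le_add_right _ j) hφ.tendsto_atTop
  exact tendsto_nhds_unique (ha.tendsto_of_subseq (hψ j) (hlim j))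
    (ha.tendsto_of_subseq (hψ 0) (hlim 0))

theorem exists_le_add_and_iterate_eq_add_mul (hmono : Monotone P)
    (hsmono : ∀ u v, u ≤ v → ∀ x, u x < v x → P u x < P v x) (hadd : IsAddHomogeneous P)
    (hφ : StrictMono φ) (hacc : Tendsto (fun k x => P^[φ k] f x - c k) atTop (𝓝 g)) :
    ∃ β, (∀ x, P g x ≤ g x + β) ∧ ∃ x, ∀ n : ℕ, P^[n] g x = g x + n * β :=
  ⟨maxIncrement P g, fun x => by linarith [sub_le_maxIncrement (P := P) g x],
    exists_iterate_eq_add_mul_maxIncrement hsmono hadd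
      (maxIncrement_iterate_eq_of_tendsto hmono hadd hφ hacc)⟩

theorem exists_add_le_and_iterate_eq_add_mul (hmono : Monotone P)
    (hsmono : ∀ u v, u ≤ v → ∀ x, u x < v x → P u x < P v x) (hadd : IsAddHomogeneous P)
    (hφ : StrictMono φ) (hacc : Tendsto (fun k x => P^[φ k] f x - c k) atTop (𝓝 g)) :
    ∃ α, (∀ x, g x + α ≤ P g x) ∧ ∃ x, ∀ n : ℕ, P^[n] g x = g x + n * α := by
  have hacc' : Tendsto (fun k x => (negConj P)^[φ k] (-f) x - -c k) atTop (𝓝 (-g)) := by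
    convert hacc.neg using 2 with k
    funext x
    simp only [iterate_negConj, neg_neg, Pi.neg_apply, sub_neg_eq_add, neg_sub]
    ring
  obtain ⟨β, hβ, x, hx⟩ := exists_le_add_and_iterate_eq_add_mul (monotone_negConj hmono)
    (negConj_lt_negConj hsmono) (isAddHomogeneous_negConj hadd) hφ hacc'
  refine ⟨-β, fun y => ?_, x, fun n => ?_⟩
  · have := hβ y
    simp only [negConj, neg_neg, Pi.neg_apply] at this
    linarith
  · have := hx n
    simp only [iterate_negConj, neg_neg, Pi.neg_apply] at this
    linarith

end Increment

end TopicalMap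

open TopicalMap

theorem stmt9 (N : ℕ) (hN : 1 ≤ N) (x₀ : Fin N) (P : (Fin N → ℝ) → (Fin N → ℝ))
    (mono : ∀ f g : Fin N → ℝ, (∀ x, g x ≤ f x) → ∀ x, P g x ≤ P f x)
    (smono : ∀ f g : Fin N → ℝ, (∀ x, g x ≤ f x) → ∀ x, g x < f x → P g x < P f x)
    (cadd : ∀ (f : Fin N → ℝ) (c : ℝ), P (fun x => f x + c) = fun x => P f x + c)
    (f g : Fin N → ℝ) (φ : ℕ → ℕ) (hφ : StrictMono φ)
    (hacc : Tendsto (fun k => fun x => P^[φ k] f x - P^[φ k] f x₀) atTop (nhds g)) :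
    ∃ lam : ℝ, P g = (fun x => g x + lam) ∧
      ∀ n : ℕ, P^[n] g = fun x => g x + n * lam := by
  have : Nonempty (Fin N) := ⟨⟨0, hN⟩⟩
  have hmono : Monotone P := fun u v h => mono v u h
  have hsmono : ∀ u v : Fin N → ℝ, u ≤ v → ∀ x, u x < v x → P u x < P v x :=
    fun u v h => smono v u h
  obtain ⟨β, hβ, xa, hxa⟩ := exists_le_add_and_iterate_eq_add_mul hmono hsmono cadd hφ hacc
  obtain ⟨α, hα, xb, hxb⟩ := exists_add_le_and_iterate_eq_add_mul hmono hsmono cadd hφ hacc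
  obtain ⟨C, hC⟩ := frequently_iterate_sub_le (lipschitzWith_one hmono cadd) cadd hφ hacc xa xb
  have hβα : β - α ≤ 0 := nonpos_of_frequently_add_mul_le (a := g xa - g xb) <|
    hC.mono fun n hn => by rw [hxa, hxb] at hn; linarith
  have hPg : P g = fun x => g x + β := funext fun x => le_antisymm (hβ x) (by linarith [hα x])
  exact ⟨β, hPg, iterate_eq_add_mul_of_apply_eq_add cadd hPg⟩
end
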